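/- arXiv:2402.12879 — 6 statements merged into one kernel-verified Lean document; each statement's English description precedes it below -/
import Mathlib

section
/- Let R be a commutative ring of characteristic p whose Frobenius endomorphism x ↦ x^p is surjective (R is semiperfect), and let R → R' be an étale ring homomorphism. Then the Frobenius endomorphism of R' is also surjective. -/
/-!
Let `T ⊆ R'` be the subring of `p`-th powers. Since `R` is semiperfect, `T` contains the image
of `R`, so `R'` is of finite type, hence finite (every `x` is a root of `X ^ p - x ^ p`), and
formally unramified over `T`. For a maximal ideal `m` of `T`, the fibre `R' ⧸ m R'` is unramified
over the field `T ⧸ m`, hence reduced; as all its `p`-th powers come from `T ⧸ m`, it is a field,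
purely inseparable over `T ⧸ m`, and therefore equal to `T ⧸ m`. By Nakayama, `T = R'`.
-/

universe u

theorem isField_of_pow_mem_range {K B : Type*} [Field K] [CommRing B] [Nontrivial B]
    [IsReduced B] [Algebra K B] {n : ℕ} (hn : 0 < n)
    (h : ∀ x : B, x ^ n ∈ (algebraMap K B).range) : IsField B := by
  refine ⟨exists_pair_ne B, mul_comm, fun {x} hx => ?_⟩
  obtain ⟨a, ha⟩ := h x
  have ha0 : a ≠ 0 := by
    rintro rfl
    exact hx (IsReduced.eq_zero x ⟨n, by rw [← ha, map_zero]⟩)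
  refine ⟨x ^ (n - 1) * algebraMap K B a⁻¹, ?_⟩
  rw [← mul_assoc, ← pow_succ', Nat.sub_add_cancel hn, ← ha, ← map_mul, mul_inv_cancel₀ ha0,
    map_one]

theorem Module.subsingleton_of_forall_isMaximal_smul_top_eq_top {R M : Type*} [CommRing R]
    [AddCommGroup M] [Module R M] [Module.Finite R M]
    (h : ∀ m : Ideal R, m.IsMaximal → m • (⊤ : Submodule R M) = ⊤) : Subsingleton M := by
  by_contra hM
  obtain ⟨m, hm, hann⟩ := Ideal.exists_le_maximal (Module.annihilator R M)
    (mt Module.annihilator_eq_top_iff.mp hM)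
  obtain ⟨r, hr1, hr_smul⟩ := Submodule.exists_sub_one_mem_and_smul_eq_zero_of_fg_of_le_smul m ⊤
    Module.Finite.fg_top (h m hm).ge
  have hr : r ∈ m := hann (Module.mem_annihilator.mpr fun x => hr_smul x trivial)
  exact hm.ne_top ((Ideal.eq_top_iff_one m).mpr (by simpa using m.sub_mem hr hr1))

namespace Algebra

theorem surjective_algebraMap_of_forall_isMaximal {R S : Type*} [CommRing R]
    [CommRing S] [Algebra R S] [Module.Finite R S]
    (h : ∀ m : Ideal R, m.IsMaximal →
      Function.Surjective (algebraMap (R ⧸ m) (S ⧸ m.map (algebraMap R S)))) :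
    Function.Surjective (algebraMap R S) := by
  set N := LinearMap.range (Algebra.linearMap R S)
  suffices Subsingleton (S ⧸ N) from fun s =>
    (Submodule.Quotient.subsingleton_iff.mp this ▸ Submodule.mem_top : s ∈ N)
  refine Module.subsingleton_of_forall_isMaximal_smul_top_eq_top (R := R) fun m hm =>
    top_le_iff.mp fun q _ => ?_
  obtain ⟨s, rfl⟩ := N.mkQ_surjective q
  obtain ⟨t, ht⟩ := (h m hm).comp Ideal.Quotient.mk_surjective (Ideal.Quotient.mk _ s)
  have hs : s - algebraMap R S t ∈ m • (⊤ : Submodule R S) := by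
    rw [Ideal.smul_top_eq_map, Submodule.restrictScalars_mem, ← Ideal.Quotient.eq]
    exact ht.symm
  have : N.mkQ s = N.mkQ (s - algebraMap R S t) :=
    (Submodule.Quotient.eq N).mpr (by rw [sub_sub_cancel]; exact ⟨t, rfl⟩)
  exact this ▸ Submodule.smul_top_le_comap_smul_top m N.mkQ hs

namespace FormallyUnramified

theorem surjective_algebraMap_of_pow_mem_range {K B : Type*} [Field K] [CommRing B]
    [Algebra K B] [FormallyUnramified K B] [EssFiniteType K B] (p : ℕ) [ExpChar K p]
    (h : ∀ x : B, x ^ p ∈ (algebraMap K B).range) : Function.Surjective (algebraMap K B) := by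
  cases subsingleton_or_nontrivial B
  · exact Function.surjective_to_subsingleton _
  have := isReduced_of_field K B
  let := (isField_of_pow_mem_range (expChar_pos K p) h).toField
  have : IsPurelyInseparable K B :=
    (isPurelyInseparable_iff_pow_mem K p).mpr fun x => ⟨1, by simpa using h x⟩
  rw [← RingHom.range_eq_top]
  exact range_eq_top_of_isPurelyInseparable K B

theorem surjective_algebraMap_of_finite_of_pow_mem_range
    {T S : Type*} [CommRing T] [CommRing S] [Algebra T S] [Module.Finite T S]
    [FormallyUnramified T S] (p : ℕ) [Fact p.Prime] [CharP T p]
    (h : ∀ x : S, x ^ p ∈ (algebraMap T S).range) : Function.Surjective (algebraMap T S) := by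
  refine surjective_algebraMap_of_forall_isMaximal fun m hm => ?_
  let := Ideal.Quotient.field m
  have : CharP (T ⧸ m) p := (CharP.charP_iff_prime_eq_zero Fact.out).mpr (by
    rw [← map_natCast (Ideal.Quotient.mk m), CharP.cast_eq_zero, map_zero])
  refine surjective_algebraMap_of_pow_mem_range p fun x => ?_
  obtain ⟨s, rfl⟩ := Ideal.Quotient.mk_surjective x
  obtain ⟨t, ht⟩ := h s
  exact ⟨Ideal.Quotient.mk m t, by
    rw [Ideal.Quotient.algebraMap_quotient_map_quotient, ht, map_pow]⟩

end FormallyUnramified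

end Algebra

def frobeniusSubalgebra (p : ℕ) (R R' : Type*) [CommRing R] [CommRing R']
    [ExpChar R p] [ExpChar R' p] [Algebra R R'] (hR : Function.Surjective (frobenius R p)) :
    Subalgebra R R' where
  toSubsemiring := (frobenius R' p).rangeS
  algebraMap_mem' r := by
    obtain ⟨s, rfl⟩ := hR r
    exact ⟨algebraMap R R' s, ((algebraMap R R').map_frobenius p s).symm⟩

theorem surjective_frobenius_of_formallyUnramified (p : ℕ) [Fact p.Prime] (R R' : Type*)
    [CommRing R] [CommRing R'] [CharP R p] [CharP R' p] [Algebra R R']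
    [Algebra.FormallyUnramified R R'] [Algebra.FiniteType R R']
    (hR : Function.Surjective (frobenius R p)) : Function.Surjective (frobenius R' p) := by
  let T := frobeniusSubalgebra p R R' hR
  have hpow (x : R') : x ^ p ∈ (algebraMap T R').range := ⟨⟨x ^ p, x, frobenius_def p x⟩, rfl⟩
  have : Algebra.FiniteType T R' := .of_restrictScalars_finiteType R T R'
  have : Algebra.IsIntegral T R' := ⟨fun x => .of_pow (expChar_pos R' p) <| by
    obtain ⟨t, ht⟩ := hpow x
    exact ht ▸ isIntegral_algebraMap⟩
  have : Module.Finite T R' := Algebra.IsIntegral.finite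
  have : Algebra.FormallyUnramified T R' := .of_restrictScalars R T R'
  have : CharP T p := (algebraMap T R').charP Subtype.val_injective p
  intro x
  obtain ⟨⟨_, y, rfl⟩, hy⟩ :=
    Algebra.FormallyUnramified.surjective_algebraMap_of_finite_of_pow_mem_range p hpow x
  exact ⟨y, hy⟩

/-- an étale extension of a semiperfect `𝔽_p`-algebra is semiperfect. -/
theorem semiperfect_of_etale
    (p : ℕ) [Fact p.Prime] (R R' : Type u) [CommRing R] [CommRing R']
    [CharP R p] [CharP R' p] [Algebra R R'] [Algebra.Etale R R']
    (hR : Function.Surjective (frobenius R p)) :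
    Function.Surjective (frobenius R' p) :=
  surjective_frobenius_of_formallyUnramified p R R' hR
end

section
/- Let R be a ring, A an R-algebra, I ⊂ A an ideal with A I-adically complete (A ≅ lim A/I^n), and X a smooth affine R-scheme. Then the canonical map X(A) → lim_n X(A/I^n) is a bijection. -/
/-! Because `A` is the inverse limit of the `A ⧸ I ^ n` as an `R`-algebra, a compatible family of
`R`-algebra maps `S → A ⧸ I ^ n` glues to a unique `R`-algebra map `S → A`
(`IsAdicComplete.liftAlgHom`, `IsAdicComplete.algHom_ext`). -/

universe u

theorem Ideal.Quotient.factorₐ_pow_comp_of_factor_succ {R S A : Type*} [CommRing R] [CommRing S]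
    [CommRing A] [Algebra R S] [Algebra R A] {I : Ideal A} {f : ∀ n : ℕ, S →ₐ[R] A ⧸ I ^ n}
    (hf : ∀ (n : ℕ) (s : S),
      Ideal.Quotient.factor (Ideal.pow_le_pow_right n.le_succ) (f (n + 1) s) = f n s)
    {m n : ℕ} (hmn : m ≤ n) :
    (Ideal.Quotient.factorₐ R (Ideal.pow_le_pow_right hmn)).comp (f n) = f m :=
  AlgHom.ext fun s => (Ideal.Quotient.eq_factor_of_eq_factor_succ
    (fun _ _ h => Ideal.pow_le_pow_right h) (fun k => f k s) (fun k => (hf k s).symm) hmn).symm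

theorem smooth_affine_points_bijective_of_adic_complete_general
    (R : Type u) (S : Type u) (A : Type u) [CommRing R] [CommRing S] [CommRing A]
    [Algebra R S] [Algebra R A]
    (I : Ideal A) [IsAdicComplete I A] :
    Function.Bijective
      (fun φ : S →ₐ[R] A =>
        (⟨fun n => (Ideal.Quotient.mkₐ R (I ^ n)).comp φ,
          fun n s => Ideal.Quotient.factor_mk (Ideal.pow_le_pow_right n.le_succ) _⟩ :
          {f : ∀ n : ℕ, S →ₐ[R] A ⧸ I ^ n //
            ∀ (n : ℕ) (s : S),
              Ideal.Quotient.factor (S := I ^ (n + 1)) (T := I ^ n)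
                (Ideal.pow_le_pow_right n.le_succ) (f (n + 1) s) = f n s})) := by
  constructor
  · intro φ ψ h
    exact IsAdicComplete.algHom_ext I fun n => congrFun (congrArg Subtype.val h) n
  · rintro ⟨f, hf⟩
    have hcompat := fun {m n : ℕ} (hmn : m ≤ n) =>
      Ideal.Quotient.factorₐ_pow_comp_of_factor_succ hf hmn
    exact ⟨IsAdicComplete.liftAlgHom I f hcompat,
      Subtype.ext <| funext fun n => IsAdicComplete.mkₐ_comp_liftAlgHom I f hcompat n⟩

/-- for a smooth affine `R`-scheme `X = Spec S` and an `I`-adically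
complete `R`-algebra `A`, the map `X(A) → lim_n X(A/I^n)` is bijective. -/
theorem smooth_affine_points_bijective_of_adic_complete
    (R : Type u) (S : Type u) (A : Type u) [CommRing R] [CommRing S] [CommRing A]
    [Algebra R S] [Algebra.Smooth R S] [Algebra R A]
    (I : Ideal A) [IsAdicComplete I A] :
    Function.Bijective
      (fun φ : S →ₐ[R] A =>
        (⟨fun n => (Ideal.Quotient.mkₐ R (I ^ n)).comp φ,
          fun n s => Ideal.Quotient.factor_mk (Ideal.pow_le_pow_right n.le_succ) _⟩ :
          {f : ∀ n : ℕ, S →ₐ[R] A ⧸ I ^ n //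
            ∀ (n : ℕ) (s : S),
              Ideal.Quotient.factor (S := I ^ (n + 1)) (T := I ^ n)
                (Ideal.pow_le_pow_right n.le_succ) (f (n + 1) s) = f n s})) :=
  smooth_affine_points_bijective_of_adic_complete_general R S A I
end

section
/- Let κ : (A, I, σ, σ̇) → (B, J, τ, τ̇) be a morphism of frames, i.e. a ring homomorphism κ : A → B with κ(I) ⊆ J, τ∘κ = κ∘σ, and τ̇∘κ|_I = v·(κ∘σ̇) for some unit v ∈ B^×. Then the unit v is uniquely determined by κ, and if θ and η denote the frame constants of the two frames, then κ(θ) = v·η. -/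
/-!
Since `σ̇(I)` generates the unit ideal of `A`, its image under `κ` generates the unit ideal of `B`,
so an element of `B` is determined by its products with the elements `κ(σ̇ x)`. Both claims are
such identities: `v' κ(σ̇ x) = τ̇(κ x) = v κ(σ̇ x)`, and
`κ(θ) κ(σ̇ x) = κ(σ x) = τ(κ x) = η τ̇(κ x) = v η κ(σ̇ x)`.
-/

theorem RingHom.eq_of_forall_mul_apply_eq_of_span_eq_top {A B : Type*} [Semiring A]
    [CommSemiring B] (κ : A →+* B) {S : Set A} (hS : Ideal.span S = ⊤) {b c : B}
    (h : ∀ s ∈ S, b * κ s = c * κ s) : b = c := by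
  have hone : (1 : B) ∈ Ideal.span (κ '' S) := by
    rw [← Ideal.map_span, hS, Ideal.map_top]
    exact Submodule.mem_top
  have hspan : ∀ y ∈ Ideal.span (κ '' S), b * y = c * y := by
    intro y hy
    induction hy using Submodule.span_induction with
    | mem y hy =>
      obtain ⟨s, hs, rfl⟩ := hy
      exact h s hs
    | zero => simp only [mul_zero]
    | add y z _ _ hy hz => rw [mul_add, mul_add, hy, hz]
    | smul a y _ hy => rw [smul_eq_mul, mul_left_comm, hy, mul_left_comm]
  simpa only [mul_one] using hspan 1 hone

theorem frame_morphism_unit_unique_and_constant_general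
    (A B : Type*) [CommRing A] [CommRing B]
    (I : Ideal A) (J : Ideal B)
    (σ : A →+* A)
    (τ : B →+* B)
    (σdot : I → A)
    (hsurjσ : Ideal.span (Set.range σdot) = ⊤)
    (τdot : J → B)
    -- frame constants
    (θ : A) (hθ : ∀ x : I, σ x = θ * σdot x)
    (η : B) (hη : ∀ x : J, τ x = η * τdot x)
    -- the morphism of frames
    (κ : A →+* B) (hκI : ∀ x : I, κ x ∈ J)
    (hκσ : ∀ a : A, τ (κ a) = κ (σ a))
    (v : Bˣ) (hv : ∀ x : I, τdot ⟨κ x, hκI x⟩ = v * κ (σdot x)) :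
    (∀ v' : Bˣ, (∀ x : I, τdot ⟨κ x, hκI x⟩ = v' * κ (σdot x)) → v' = v) ∧
      κ θ = v * η := by
  have determined : ∀ b c : B, (∀ x : I, b * κ (σdot x) = c * κ (σdot x)) → b = c :=
    fun b c h => κ.eq_of_forall_mul_apply_eq_of_span_eq_top hsurjσ (Set.forall_mem_range.2 h)
  refine ⟨fun v' hv' => Units.ext (determined _ _ fun x => (hv' x).symm.trans (hv x)),
    determined _ _ fun x => ?_⟩
  calc κ θ * κ (σdot x) = κ (σ x) := by rw [← map_mul, ← hθ]
    _ = η * τdot ⟨κ x, hκI x⟩ := by rw [← hκσ]; exact hη ⟨κ x, hκI x⟩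
    _ = v * η * κ (σdot x) := by rw [hv]; ring

/-- for a morphism of frames `κ : (A,I,σ,σ̇) → (B,J,τ,τ̇)` with
`τ̇ ∘ κ = v · (κ ∘ σ̇)` for a unit `v`, the unit `v` is unique, and
`κ(θ) = v·η` for the frame constants `θ`, `η`. -/
theorem frame_morphism_unit_unique_and_constant
    (p : ℕ) (hp : p.Prime) (A B : Type*) [CommRing A] [CommRing B]
    (I : Ideal A) (J : Ideal B)
    (hradA : I + Ideal.span {(p : A)} ≤ (⊥ : Ideal A).jacobson)
    (hradB : J + Ideal.span {(p : B)} ≤ (⊥ : Ideal B).jacobson)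
    (σ : A →+* A) (hσ : ∀ x : A, σ x - x ^ p ∈ Ideal.span {(p : A)})
    (τ : B →+* B) (hτ : ∀ x : B, τ x - x ^ p ∈ Ideal.span {(p : B)})
    (σdot : I → A)
    (haddσ : ∀ x y : I, σdot (x + y) = σdot x + σdot y)
    (hsemiσ : ∀ (a : A) (x : I), σdot (a • x) = σ a * σdot x)
    (hsurjσ : Ideal.span (Set.range σdot) = ⊤)
    (τdot : J → B)
    (haddτ : ∀ x y : J, τdot (x + y) = τdot x + τdot y)
    (hsemiτ : ∀ (b : B) (x : J), τdot (b • x) = τ b * τdot x)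
    (hsurjτ : Ideal.span (Set.range τdot) = ⊤)
    -- frame constants
    (θ : A) (hθ : ∀ x : I, σ x = θ * σdot x)
    (η : B) (hη : ∀ x : J, τ x = η * τdot x)
    -- the morphism of frames
    (κ : A →+* B) (hκI : ∀ x : I, κ x ∈ J)
    (hκσ : ∀ a : A, τ (κ a) = κ (σ a))
    (v : Bˣ) (hv : ∀ x : I, τdot ⟨κ x, hκI x⟩ = v * κ (σdot x)) :
    (∀ v' : Bˣ, (∀ x : I, τdot ⟨κ x, hκI x⟩ = v' * κ (σdot x)) → v' = v) ∧
      κ θ = v * η :=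
  frame_morphism_unit_unique_and_constant_general A B I J σ τ σdot hsurjσ τdot θ hθ η hη κ hκI hκσ v
    hv
end

section
/- Let A be a commutative ring, and let w, t ∈ A be such that (w^p, t) is a regular sequence and p = u·t − w^p for some unit u ∈ A^× (equivalently, t ≡ u^{-1}·p modulo w^p, as happens for t = [p]_q in the ring Δ_S). Suppose moreover that in A/(t) the element p is a non-zero divisor. Then p is a non-zero divisor in A/(w^p): if p·x = w^p·y in A, then w^p divides x. -/
/-! Modulo `w ^ p` the element `p` is the unit `u` times `t`, so it is a non-zero divisor there
exactly because `t` is. -/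

theorem dvd_of_dvd_mul_of_dvd_sub_units_mul {A : Type*} [CommRing A] {a s t : A} (u : Aˣ)
    (ht : ∀ z : A, a ∣ t * z → a ∣ z) (hs : a ∣ s - u * t) {x : A} (hx : a ∣ s * x) :
    a ∣ x := by
  have htux : a ∣ t * (u * x) := by
    have : t * (u * x) = s * x - (s - u * t) * x := by ring
    rw [this]
    exact dvd_sub hx (dvd_mul_of_dvd_left hs x)
  exact (Units.dvd_mul_left).mp (ht _ htux)

theorem p_regular_mod_w_pow_p_general
    (p : ℕ) (A : Type*) [CommRing A] (w t : A)
    -- `(w^p, t)` is a regular sequence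
    (hreg2 : ∀ z : A, t * z ∈ Ideal.span {w ^ p} → z ∈ Ideal.span {w ^ p})
    -- `p = u·t − w^p` for a unit `u`
    (u : Aˣ) (hu : (p : A) = u * t - w ^ p) :
    ∀ x y : A, (p : A) * x = w ^ p * y → w ^ p ∣ x := by
  intro x y hxy
  have ht : ∀ z : A, w ^ p ∣ t * z → w ^ p ∣ z := by
    simpa only [Ideal.mem_span_singleton] using hreg2
  have hp : w ^ p ∣ (p : A) - u * t := ⟨-1, by rw [hu]; ring⟩
  exact dvd_of_dvd_mul_of_dvd_sub_units_mul u ht hp ⟨y, hxy⟩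

/-- if `(w^p, t)` is a regular sequence in `A`, `p = u·t − w^p` for a
unit `u`, and `p` is a non-zero divisor in `A/(t)`, then `p` is a non-zero divisor
in `A/(w^p)`: whenever `p·x = w^p·y`, the element `w^p` divides `x`. -/
theorem p_regular_mod_w_pow_p
    (p : ℕ) (hp : p.Prime) (A : Type*) [CommRing A] (w t : A)
    -- `(w^p, t)` is a regular sequence
    (hreg1 : ∀ z : A, w ^ p * z = 0 → z = 0)
    (hreg2 : ∀ z : A, t * z ∈ Ideal.span {w ^ p} → z ∈ Ideal.span {w ^ p})
    -- `p = u·t − w^p` for a unit `u`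
    (u : Aˣ) (hu : (p : A) = u * t - w ^ p)
    -- `p` is a non-zero divisor in `A/(t)`
    (hpt : ∀ z : A, (p : A) * z ∈ Ideal.span {t} → z ∈ Ideal.span {t}) :
    ∀ x y : A, (p : A) * x = w ^ p * y → w ^ p ∣ x :=
  p_regular_mod_w_pow_p_general p A w t hreg2 u hu
end

section
/- Let A be a commutative ring, I ⊂ A an ideal, and suppose a, b ∈ A are such that (a, b) is a regular sequence in A. If a sequence (x_i) of elements of the ideal K = {x ∈ A : b divides σ(x)} (for a ring endomorphism σ of A with σ(a) = a^p) converges a-adically to x ∈ A, and A is a-adically separated and complete, and (a^p, b) is a regular sequence, then b divides σ(x); i.e. K is a-adically closed in A. -/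
/-!
Pick `xᵢ` with `x ≡ xᵢ mod aⁿ` and write `σ xᵢ = b yₙ`; since `σ a = a ^ p` with `p ≥ 1`,
`σ x ≡ b yₙ mod aⁿ`. Regularity of `(a, b)` lets one cancel `b` modulo powers of `a`, so `(yₙ)` is
`a`-adically Cauchy; its limit `y` satisfies `σ x = b y` because `A` is `a`-adically separated.
-/

section

variable {A : Type*} [CommRing A]

lemma smodEq_span_singleton_pow_iff (a x y : A) (n : ℕ) :
    x ≡ y [SMOD (Ideal.span {a} ^ n • ⊤ : Ideal A)] ↔ a ^ n ∣ x - y := by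
  rw [smul_eq_mul, Ideal.mul_top, SModEq.sub_mem, Ideal.span_singleton_pow,
    Ideal.mem_span_singleton]

lemma pow_dvd_of_pow_dvd_mul_left {a b : A} (ha : ∀ z : A, a * z = 0 → z = 0)
    (hb : ∀ z : A, a ∣ b * z → a ∣ z) (n : ℕ) {z : A} (h : a ^ n ∣ b * z) : a ^ n ∣ z := by
  induction n generalizing z with
  | zero => exact (pow_zero a).symm ▸ one_dvd z
  | succ n ih =>
    obtain ⟨z', rfl⟩ := hb z (dvd_trans (dvd_pow_self a n.succ_ne_zero) h)
    obtain ⟨w, hw⟩ := h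
    have hbz' : b * z' = a ^ n * w :=
      sub_eq_zero.mp (ha _ (by linear_combination hw))
    rw [pow_succ']
    exact mul_dvd_mul_left a (ih ⟨w, hbz'⟩)

lemma dvd_of_forall_pow_dvd_sub_mul {a b c : A} [IsAdicComplete (Ideal.span {a}) A]
    (ha : ∀ z : A, a * z = 0 → z = 0) (hb : ∀ z : A, a ∣ b * z → a ∣ z)
    (h : ∀ n : ℕ, ∃ y : A, a ^ n ∣ c - b * y) : b ∣ c := by
  choose ys hys using h
  have hcauchy {m n : ℕ} (hmn : m ≤ n) :
      ys m ≡ ys n [SMOD (Ideal.span {a} ^ m • ⊤ : Ideal A)] := by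
    rw [smodEq_span_singleton_pow_iff]
    refine pow_dvd_of_pow_dvd_mul_left ha hb m ?_
    rw [show b * (ys m - ys n) = (c - b * ys n) - (c - b * ys m) by ring]
    exact dvd_sub ((pow_dvd_pow a hmn).trans (hys n)) (hys m)
  obtain ⟨y, hy⟩ := IsPrecomplete.prec inferInstance hcauchy
  refine ⟨y, (IsHausdorff.eq_iff_smodEq (I := Ideal.span {a})).mpr fun n ↦ ?_⟩
  rw [smodEq_span_singleton_pow_iff, show c - b * y = (c - b * ys n) + b * (ys n - y) by ring]
  exact dvd_add (hys n) <|
    dvd_mul_of_dvd_right ((smodEq_span_singleton_pow_iff a _ _ n).mp (hy n)) b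

end

theorem divisibility_closed_under_adic_limits_general
    (p : ℕ) (hp : p.Prime) (A : Type*) [CommRing A] (a b : A)
    (σ : A →+* A) (hσa : σ a = a ^ p)
    -- `(a, b)` is a regular sequence
    (hreg1 : ∀ z : A, a * z = 0 → z = 0)
    (hreg2 : ∀ z : A, b * z ∈ Ideal.span {a} → z ∈ Ideal.span {a})
    -- `A` is `a`-adically separated and complete
    [IsAdicComplete (Ideal.span {a}) A]
    -- a sequence in `K = {x : b ∣ σ x}` converging `a`-adically to `x`
    (x : A) (xs : ℕ → A) (hK : ∀ i, b ∣ σ (xs i))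
    (hconv : ∀ n : ℕ, ∃ N : ℕ, ∀ i ≥ N, x - xs i ∈ Ideal.span {a} ^ n) :
    b ∣ σ x := by
  simp only [Ideal.mem_span_singleton] at hreg2
  refine dvd_of_forall_pow_dvd_sub_mul hreg1 hreg2 fun n ↦ ?_
  obtain ⟨N, hN⟩ := hconv n
  obtain ⟨y, hy⟩ := hK N
  obtain ⟨t, ht⟩ : a ^ n ∣ x - xs N := by
    simpa only [Ideal.span_singleton_pow, Ideal.mem_span_singleton] using hN N le_rfl
  refine ⟨y, ?_⟩
  have hσ : σ x - b * y = a ^ (p * n) * σ t := by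
    rw [← hy, ← map_sub, ht, map_mul, map_pow, hσa, pow_mul]
  rw [hσ]
  exact dvd_mul_of_dvd_left (pow_dvd_pow a (Nat.le_mul_of_pos_left n hp.pos)) _

/-- the ideal `K = {x : b ∣ σ(x)}` is `a`-adically closed: if `A` is
`a`-adically separated and complete, `(a, b)` and `(a^p, b)` are regular sequences,
`σ(a) = a^p`, and a sequence `(xᵢ)` with `b ∣ σ(xᵢ)` converges `a`-adically to `x`,
then `b ∣ σ(x)`. -/
theorem divisibility_closed_under_adic_limits
    (p : ℕ) (hp : p.Prime) (A : Type*) [CommRing A] (a b : A)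
    (σ : A →+* A) (hσa : σ a = a ^ p)
    -- `(a, b)` is a regular sequence
    (hreg1 : ∀ z : A, a * z = 0 → z = 0)
    (hreg2 : ∀ z : A, b * z ∈ Ideal.span {a} → z ∈ Ideal.span {a})
    -- `(a^p, b)` is a regular sequence
    (hreg1' : ∀ z : A, a ^ p * z = 0 → z = 0)
    (hreg2' : ∀ z : A, b * z ∈ Ideal.span {a ^ p} → z ∈ Ideal.span {a ^ p})
    -- `A` is `a`-adically separated and complete
    [IsAdicComplete (Ideal.span {a}) A]
    -- a sequence in `K = {x : b ∣ σ x}` converging `a`-adically to `x`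
    (x : A) (xs : ℕ → A) (hK : ∀ i, b ∣ σ (xs i))
    (hconv : ∀ n : ℕ, ∃ N : ℕ, ∀ i ≥ N, x - xs i ∈ Ideal.span {a} ^ n) :
    b ∣ σ x :=
  divisibility_closed_under_adic_limits_general p hp A a b σ hσa hreg1 hreg2 x xs hK hconv
end

section
/- Let A be a commutative ring and a, p ∈ A such that (a, p) is a regular sequence and A is p-adically complete and a-adically complete. Then the ideal aA is p-adically closed in A, and hence A/aA is p-adically complete. -/
/-!
Since `a` is a nonzerodivisor and `p` is a nonzerodivisor modulo `a`, the element `a` remains a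
nonzerodivisor modulo every power `p ^ n`. Hence if `x ≡ a * b n` modulo `p ^ n` for all `n`,
the sequence `b n` is `p`-adically Cauchy; its limit `L` satisfies `x = a * L` by `p`-adic
separatedness, so `aA` is `p`-adically closed. Closedness of `aA` is exactly separatedness of
`A / aA`, and precompleteness passes to any quotient module.
-/

open Ideal

section AdicQuotient

variable {R M N : Type*} [CommRing R] [AddCommGroup M] [Module R M] [AddCommGroup N] [Module R N]
  {I : Ideal R}

theorem IsPrecomplete.of_surjective [IsPrecomplete I M] {f : M →ₗ[R] N}
    (hf : Function.Surjective f) : IsPrecomplete I N :=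
  AdicCompletion.of_surjective_iff.mp fun y ↦ by
    obtain ⟨x', rfl⟩ := AdicCompletion.map_surjective I hf y
    obtain ⟨x, rfl⟩ := AdicCompletion.of_surjective I M x'
    exact ⟨f x, (AdicCompletion.map_of I f x).symm⟩

theorem isHausdorff_quotient_iff {P : Submodule R M} :
    IsHausdorff I (M ⧸ P) ↔ ∀ x : M, (∀ n : ℕ, x ∈ P ⊔ I ^ n • ⊤) → x ∈ P := by
  have mem_iff : ∀ (n : ℕ) (x : M),
      P.mkQ x ∈ (I ^ n • ⊤ : Submodule R (M ⧸ P)) ↔ x ∈ P ⊔ I ^ n • ⊤ := fun n x ↦ by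
    rw [← Submodule.comap_map_mkQ, Submodule.map_smul'', Submodule.map_top,
      Submodule.range_mkQ, Submodule.mem_comap]
  simp only [isHausdorff_iff, SModEq.zero]
  refine ⟨fun h x hx ↦ ?_, fun h q hq ↦ ?_⟩
  · exact (Submodule.Quotient.mk_eq_zero P).mp (h _ fun n ↦ (mem_iff n x).mpr (hx n))
  · obtain ⟨x, rfl⟩ := P.mkQ_surjective q
    exact (Submodule.Quotient.mk_eq_zero P).mpr (h x fun n ↦ (mem_iff n x).mp (hq n))

end AdicQuotient

section PrincipalAdic

variable {A : Type*} [CommRing A] {r x y : A}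

theorem smodEq_span_singleton_pow_iff_dvd {n : ℕ} :
    x ≡ y [SMOD (span {r} ^ n • ⊤ : Submodule A A)] ↔ r ^ n ∣ x - y := by
  rw [SModEq.sub_mem, smul_eq_mul, mul_top, span_singleton_pow, mem_span_singleton]

theorem IsHausdorff.eq_of_forall_pow_dvd_sub [IsHausdorff (span {r}) A]
    (h : ∀ n : ℕ, r ^ n ∣ x - y) : x = y :=
  IsHausdorff.eq_iff_smodEq.mpr fun n ↦ smodEq_span_singleton_pow_iff_dvd.mpr (h n)

theorem IsPrecomplete.exists_forall_pow_dvd_sub [IsPrecomplete (span {r}) A] {f : ℕ → A}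
    (hf : ∀ {m n : ℕ}, m ≤ n → r ^ m ∣ f m - f n) : ∃ L : A, ∀ n, r ^ n ∣ f n - L := by
  simp_rw [← smodEq_span_singleton_pow_iff_dvd] at hf ⊢
  exact IsPrecomplete.prec ‹_› hf

end PrincipalAdic

section RegularPair

variable {A : Type*} [CommRing A] {a p : A}

theorem pow_dvd_of_pow_dvd_mul (ha : ∀ z : A, a * z = 0 → z = 0)
    (hpa : ∀ z : A, a ∣ p * z → a ∣ z) (n : ℕ) {z : A} (hz : p ^ n ∣ a * z) : p ^ n ∣ z := by
  induction n generalizing z with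
  | zero => simp
  | succ n ih =>
    obtain ⟨w, hw⟩ := hz
    obtain ⟨c, hc⟩ := hpa (p ^ n * w) ⟨z, by rw [← mul_assoc, ← pow_succ', ← hw, mul_comm]⟩
    have hzc : z = p * c := sub_eq_zero.mp <| ha _ <| by linear_combination hw + p * hc
    rw [hzc, pow_succ']
    exact mul_dvd_mul_left p (ih ⟨w, hc.symm⟩)

theorem mem_span_singleton_of_forall_mem_sup_pow [IsAdicComplete (span {p}) A]
    (ha : ∀ z : A, a * z = 0 → z = 0) (hpa : ∀ z : A, a ∣ p * z → a ∣ z) {x : A}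
    (hx : ∀ n : ℕ, x ∈ span {a} ⊔ span {p} ^ n) : x ∈ span {a} := by
  have approx : ∀ n : ℕ, ∃ b : A, p ^ n ∣ x - a * b := fun n ↦ by
    obtain ⟨y, hy, z, hz, rfl⟩ := Submodule.mem_sup.mp (hx n)
    obtain ⟨b, rfl⟩ := mem_span_singleton.mp hy
    rw [span_singleton_pow, mem_span_singleton] at hz
    exact ⟨b, by simpa using hz⟩
  choose b hb using approx
  have cauchy : ∀ {m n : ℕ}, m ≤ n → p ^ m ∣ b m - b n := fun {m n} hmn ↦
    pow_dvd_of_pow_dvd_mul ha hpa m <| by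
      rw [show a * (b m - b n) = (x - a * b n) - (x - a * b m) by ring]
      exact dvd_sub ((pow_dvd_pow p hmn).trans (hb n)) (hb m)
  obtain ⟨L, hL⟩ := IsPrecomplete.exists_forall_pow_dvd_sub cauchy
  have hxL : x = a * L := IsHausdorff.eq_of_forall_pow_dvd_sub fun n ↦ by
    rw [show x - a * L = (x - a * b n) + a * (b n - L) by ring]
    exact dvd_add (hb n) (dvd_mul_of_dvd_right (hL n) a)
  exact mem_span_singleton.mpr ⟨L, hxL⟩

end RegularPair

theorem ideal_p_adically_closed_and_quotient_complete_general
    (A : Type*) [CommRing A] (a p : A)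
    -- `(a, p)` is a regular sequence
    (hreg1 : ∀ z : A, a * z = 0 → z = 0)
    (hreg2 : ∀ z : A, p * z ∈ Ideal.span {a} → z ∈ Ideal.span {a})
    [IsAdicComplete (Ideal.span {p}) A] :
    (∀ x : A, (∀ n : ℕ, ∃ y ∈ Ideal.span {a}, x - y ∈ Ideal.span {p} ^ n) →
        x ∈ Ideal.span {a}) ∧
      IsAdicComplete
        (Ideal.span {Ideal.Quotient.mk (Ideal.span {a}) p})
        (A ⧸ Ideal.span {a}) := by
  have hpa : ∀ z : A, a ∣ p * z → a ∣ z := by simpa only [mem_span_singleton] using hreg2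
  have closed : ∀ x : A, (∀ n : ℕ, x ∈ span {a} ⊔ span {p} ^ n • ⊤) → x ∈ span {a} :=
    fun x hx ↦ mem_span_singleton_of_forall_mem_sup_pow hreg1 hpa <| by
      simpa only [smul_eq_mul, mul_top] using hx
  refine ⟨fun x hx ↦ closed x fun n ↦ ?_, ?_⟩
  · obtain ⟨y, hy, hxy⟩ := hx n
    exact Submodule.mem_sup.mpr ⟨y, hy, x - y, by simpa using hxy, add_sub_cancel y x⟩
  · rw [← Set.image_singleton, ← map_span, ← Quotient.algebraMap_eq,
      IsAdicComplete.map_algebraMap_iff]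
    exact
      { toIsHausdorff := isHausdorff_quotient_iff.mpr closed
        toIsPrecomplete := IsPrecomplete.of_surjective (Submodule.mkQ_surjective _) }

/-- if `(a, p)` is a regular sequence in `A` and `A` is both
`p`-adically and `a`-adically complete, then the ideal `aA` is `p`-adically
closed, and the quotient `A/aA` is `p`-adically complete. -/
theorem ideal_p_adically_closed_and_quotient_complete
    (A : Type*) [CommRing A] (a p : A)
    -- `(a, p)` is a regular sequence
    (hreg1 : ∀ z : A, a * z = 0 → z = 0)
    (hreg2 : ∀ z : A, p * z ∈ Ideal.span {a} → z ∈ Ideal.span {a})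
    [IsAdicComplete (Ideal.span {p}) A] [IsAdicComplete (Ideal.span {a}) A] :
    (∀ x : A, (∀ n : ℕ, ∃ y ∈ Ideal.span {a}, x - y ∈ Ideal.span {p} ^ n) →
        x ∈ Ideal.span {a}) ∧
      IsAdicComplete
        (Ideal.span {Ideal.Quotient.mk (Ideal.span {a}) p})
        (A ⧸ Ideal.span {a}) :=
  ideal_p_adically_closed_and_quotient_complete_general A a p hreg1 hreg2
end
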